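/- arXiv:gr-qc/0112060 — 2 statements merged into one kernel-verified Lean document; each statement's English description precedes it below -/
import Mathlib

section
/- For every real number w > 0, the limit of 2·M·κ(exp(w/(4·M))) as M tends to 0 from the right equals w/2. (In the paper's notation, with w = −U + V > 0, this says lim_{M→0⁺} 2M·κ[exp((−U+V)/(4M))] = (−U+V)/2, so the Schwarzschild radius formula degenerates correctly to the flat-space formula R = (−U+V)/2 as the mass tends to zero.) -/
/-- `f x = (x - 1) * exp x`; in the paper this is `κ⁻¹`. -/
noncomputable def f (x : ℝ) : ℝ := (x - 1) * Real.exp x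

/-- The Kruskal function `κ`, the inverse of the restriction of `f` to `(0, ∞)`. -/
noncomputable def kappa (z : ℝ) : ℝ := Function.invFunOn f (Set.Ioi 0) z

/-!
Since `f (κ z) = z` and `f` is increasing, the bounds `t - log t ≤ κ (exp t) ≤ t` for large `t`
follow from `f (t - log t) = (t - log t - 1) e^t / t ≤ e^t ≤ (t - 1) e^t = f t`.
Hence `κ (exp t) / t → 1`, and with `t = w / (4M) → ∞` we get
`2M κ (exp (w / (4M))) = (w / 2) · κ (exp t) / t → w / 2`.
-/

open Real Set Filter Topology

lemma hasDerivAt_f (x : ℝ) : HasDerivAt f (x * exp x) x :=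
  (((hasDerivAt_id' x).sub_const 1).mul (hasDerivAt_exp x)).congr_deriv (by ring)

lemma continuous_f : Continuous f := by
  unfold f
  fun_prop

lemma strictMonoOn_f : StrictMonoOn f (Ici 0) := by
  refine strictMonoOn_of_deriv_pos (convex_Ici 0) continuous_f.continuousOn fun x hx => ?_
  rw [interior_Ici] at hx
  rw [(hasDerivAt_f x).deriv]
  exact mul_pos hx (exp_pos x)

lemma mem_image_f_Ioi {z : ℝ} (hz : -1 < z) : z ∈ f '' Ioi 0 := by
  have hf0 : f 0 = -1 := by simp [f]
  have hz_lt : z < f (z + 2) := by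
    have : (1 : ℝ) ≤ exp (z + 2) := one_le_exp (by linarith)
    simp only [f]
    nlinarith
  obtain ⟨x, hx, hfx⟩ := intermediate_value_Ioo (show (0 : ℝ) ≤ z + 2 by linarith)
    continuous_f.continuousOn (show z ∈ Ioo (f 0) (f (z + 2)) from ⟨hf0 ▸ hz, hz_lt⟩)
  exact ⟨x, hx.1, hfx⟩

lemma kappa_pos {z : ℝ} (hz : -1 < z) : 0 < kappa z :=
  Function.invFunOn_mem (mem_image_f_Ioi hz)

lemma f_kappa {z : ℝ} (hz : -1 < z) : f (kappa z) = z :=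
  Function.invFunOn_eq (mem_image_f_Ioi hz)

lemma le_kappa_iff {x z : ℝ} (hx : 0 ≤ x) (hz : -1 < z) : x ≤ kappa z ↔ f x ≤ z := by
  rw [← strictMonoOn_f.le_iff_le hx (kappa_pos hz).le, f_kappa hz]

lemma kappa_le_iff {x z : ℝ} (hx : 0 ≤ x) (hz : -1 < z) : kappa z ≤ x ↔ z ≤ f x := by
  rw [← strictMonoOn_f.le_iff_le (kappa_pos hz).le hx, f_kappa hz]

lemma neg_one_lt_exp (t : ℝ) : -1 < exp t :=
  (neg_one_lt_zero).trans (exp_pos t)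

lemma kappa_exp_le {t : ℝ} (ht : 2 ≤ t) : kappa (exp t) ≤ t := by
  rw [kappa_le_iff (by linarith) (neg_one_lt_exp t), f]
  nlinarith [exp_pos t]

lemma sub_log_le_kappa_exp {t : ℝ} (ht : 1 ≤ t) : t - log t ≤ kappa (exp t) := by
  have ht0 : 0 < t := by linarith
  have hlog_nonneg : 0 ≤ log t := log_nonneg ht
  have hlog_le : log t ≤ t - 1 := log_le_sub_one_of_pos ht0
  rw [le_kappa_iff (by linarith) (neg_one_lt_exp t), f, exp_sub, exp_log ht0,
    ← mul_div_assoc, div_le_iff₀ ht0]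
  nlinarith [exp_pos t]

lemma tendsto_kappa_exp_div_atTop : Tendsto (fun t => kappa (exp t) / t) atTop (𝓝 1) := by
  have hlower : Tendsto (fun t => 1 - log t / t) atTop (𝓝 1) := by
    simpa using (isLittleO_log_id_atTop.tendsto_div_nhds_zero).const_sub 1
  refine tendsto_of_tendsto_of_tendsto_of_le_of_le' hlower tendsto_const_nhds ?_ ?_
  all_goals filter_upwards [eventually_ge_atTop 2] with t ht
  · rw [one_sub_div (by positivity)]
    exact div_le_div_of_nonneg_right (sub_log_le_kappa_exp (by linarith)) (by positivity)
  · exact div_le_one_of_le₀ (kappa_exp_le ht) (by positivity)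

theorem limit_small_mass (w : ℝ) (hw : w > 0) :
    Filter.Tendsto (fun M : ℝ => 2 * M * kappa (Real.exp (w / (4 * M))))
      (nhdsWithin 0 (Set.Ioi (0 : ℝ))) (nhds (w / 2)) := by
  have ht : Tendsto (fun M : ℝ => w / (4 * M)) (𝓝[>] 0) atTop := by
    refine (tendsto_inv_nhdsGT_zero.const_mul_atTop (by positivity : 0 < w / 4)).congr
      fun M => ?_
    field_simp
  have hlim := (tendsto_kappa_exp_div_atTop.comp ht).const_mul (w / 2)
  rw [mul_one] at hlim
  refine hlim.congr' ?_
  filter_upwards [self_mem_nhdsWithin] with M (hM : 0 < M)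
  simp only [Function.comp]
  field_simp
  ring
end

section
/- Fix real parameters M_m > 0, M_r > 0, v_{m1} < v_{m2}, v_{r2}, and set c := v_{r2} − v_{m2} + v_{m1}. At every point (U, V) where both exp((v_{m2} − v_{m1})/(4·M_m))·f((c − U)/(4·M_m)) > −1 and exp((V − v_{r2})/(4·M_r))·f( (M_m/M_r)·κ( exp((v_{m2} − v_{m1})/(4·M_m))·f((c − U)/(4·M_m)) ) ) > −1, the function R_r is partially differentiable in V, R_r(U, V) > 0, and ∂R_r/∂V = (1/2)·(1 − 2·M_r/R_r(U, V)). -/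
/-!
Along a line `U = const` the argument of the outer `κ` is `z(V) = exp ((V - v_{r2}) / (4 M_r)) · B`,
so `z' = z / (4 M_r)`. Writing `w = κ (z)`, the inverse function theorem gives
`κ'(z) = 1 / f'(w) = 1 / (w e^w)`, and `z = f w = (w - 1) e^w`, hence
`d/dV (2 M_r w) = 2 M_r (w - 1) / (4 M_r w) = (1 - 2 M_r / R_r) / 2`.
-/

open Real Set Filter Topology

lemma f_zero : f 0 = -1 := by simp [f]

lemma bijOn_f : BijOn f (Ioi 0) (Ioi (-1)) := by
  refine ⟨fun x hx => ?_, strictMonoOn_f.injOn.mono Ioi_subset_Ici_self, fun z hz => ?_⟩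
  · rw [mem_Ioi, ← f_zero]
    exact strictMonoOn_f self_mem_Ici (Ioi_subset_Ici_self hx) hx
  · have hz : -1 < z := hz
    have hz_lt : z < f (z + 2) := by
      have : 1 ≤ exp (z + 2) := one_le_exp (by linarith)
      simp only [f]
      nlinarith
    obtain ⟨x, hx, hfx⟩ :=
      intermediate_value_Ioo (by linarith) continuous_f.continuousOn ⟨f_zero ▸ hz, hz_lt⟩
    exact ⟨x, hx.1, hfx⟩

lemma invOn_kappa_f : InvOn kappa f (Ioi 0) (Ioi (-1)) :=
  bijOn_f.invOn_invFunOn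

lemma bijOn_kappa : BijOn kappa (Ioi (-1)) (Ioi 0) :=
  BijOn.symm invOn_kappa_f.symm bijOn_f

lemma strictMonoOn_kappa : StrictMonoOn kappa (Ioi (-1)) := fun x hx y hy hxy => by
  rwa [← strictMonoOn_f.lt_iff_lt (kappa_pos hx).le (kappa_pos hy).le, f_kappa hx, f_kappa hy]

lemma continuousAt_kappa {z : ℝ} (hz : -1 < z) : ContinuousAt kappa z := by
  refine continuousAt_of_monotoneOn_of_image_mem_nhds strictMonoOn_kappa.monotoneOn
    (Ioi_mem_nhds hz) ?_
  rw [bijOn_kappa.image_eq]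
  exact Ioi_mem_nhds (kappa_pos hz)

lemma hasDerivAt_kappa {z : ℝ} (hz : -1 < z) :
    HasDerivAt kappa (kappa z * exp (kappa z))⁻¹ z :=
  (hasDerivAt_f _).of_local_left_inverse (continuousAt_kappa hz)
    (mul_pos (kappa_pos hz) (exp_pos _)).ne'
    (eventually_of_mem (Ioi_mem_nhds hz) fun _ hy => f_kappa hy)

lemma hasDerivAt_kappa_exp_mul {a k B v : ℝ} (hz : -1 < exp ((v - a) / k) * B) :
    HasDerivAt (fun v => kappa (exp ((v - a) / k) * B))
      ((1 - 1 / kappa (exp ((v - a) / k) * B)) / k) v := by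
  have hexp : HasDerivAt (fun v => exp ((v - a) / k) * B) (exp ((v - a) / k) * B / k) v := by
    refine ((((hasDerivAt_id v).sub_const a).div_const k).exp.mul_const B).congr_deriv ?_
    simp only [id_eq]
    ring
  refine ((hasDerivAt_kappa hz).comp v hexp).congr_deriv ?_
  set w := kappa (exp ((v - a) / k) * B)
  have hw : w ≠ 0 := (kappa_pos hz).ne'
  rw [← f_kappa hz, f]
  field_simp
  ring

theorem Rr_partial_V_general (Mm Mr vm1 vm2 vr2 c : ℝ)
    (hMr : Mr > 0)
    (Rr : ℝ → ℝ → ℝ)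
    (hRr : ∀ U V : ℝ,
      Rr U V = 2 * Mr * kappa (Real.exp ((V - vr2) / (4 * Mr)) *
        f ((Mm / Mr) * kappa (Real.exp ((vm2 - vm1) / (4 * Mm)) * f ((c - U) / (4 * Mm)))))) :
    ∀ U V : ℝ,
      Real.exp ((vm2 - vm1) / (4 * Mm)) * f ((c - U) / (4 * Mm)) > -1 →
      Real.exp ((V - vr2) / (4 * Mr)) *
        f ((Mm / Mr) * kappa (Real.exp ((vm2 - vm1) / (4 * Mm)) * f ((c - U) / (4 * Mm)))) > -1 →
      Rr U V > 0 ∧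
      HasDerivAt (fun v => Rr U v) ((1 / 2) * (1 - 2 * Mr / Rr U V)) V := by
  intro U V _ hz
  have hw := kappa_pos hz
  refine ⟨by rw [hRr]; positivity, ?_⟩
  simp only [hRr U]
  refine ((hasDerivAt_kappa_exp_mul hz).const_mul (2 * Mr)).congr_deriv ?_
  field_simp
  ring

theorem Rr_partial_V (Mm Mr vm1 vm2 vr2 c : ℝ)
    (hMm : Mm > 0) (hMr : Mr > 0) (hv : vm1 < vm2) (hc : c = vr2 - vm2 + vm1)
    (Rr : ℝ → ℝ → ℝ)
    (hRr : ∀ U V : ℝ,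
      Rr U V = 2 * Mr * kappa (Real.exp ((V - vr2) / (4 * Mr)) *
        f ((Mm / Mr) * kappa (Real.exp ((vm2 - vm1) / (4 * Mm)) * f ((c - U) / (4 * Mm)))))) :
    ∀ U V : ℝ,
      Real.exp ((vm2 - vm1) / (4 * Mm)) * f ((c - U) / (4 * Mm)) > -1 →
      Real.exp ((V - vr2) / (4 * Mr)) *
        f ((Mm / Mr) * kappa (Real.exp ((vm2 - vm1) / (4 * Mm)) * f ((c - U) / (4 * Mm)))) > -1 →
      Rr U V > 0 ∧
      HasDerivAt (fun v => Rr U v) ((1 / 2) * (1 - 2 * Mr / Rr U V)) V :=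
  Rr_partial_V_general Mm Mr vm1 vm2 vr2 c hMr Rr hRr
end
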